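/- arXiv:2504.15156 — 3 statements merged into one kernel-verified Lean document; each statement's English description precedes it below -/
import Mathlib

section
/- For any α > 0, every hybrid path s (a maximizer of the hybrid objective h(u) = (1−α) Σ_t log P(y_t = u_t | x) + α log P(y = u | x)) is admissible, i.e., P(y = s | x) > 0. -/
open Finset
open scoped Classical

noncomputable section

/-- Pointwise posterior probability `P(y_t = j | x)`: the marginal at time `t` of the
posterior distribution `q` of the hidden state sequence given the observed sequence. -/
def ptwMarg {S : Type*} [Fintype S] (n : ℕ) (q : (Fin n → S) → ℝ) (t : Fin n) (j : S) : ℝ :=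
  ∑ v ∈ Finset.univ.filter (fun v : Fin n → S => v t = j), q v

/-- The hybrid objective
`h_α(u) = (1 - α) Σ_t log P(y_t = u_t | x) + α log P(y = u | x)`. -/
def hybridObj {S : Type*} [Fintype S] (n : ℕ) (q : (Fin n → S) → ℝ) (α : ℝ)
    (u : Fin n → S) : ℝ :=
  (1 - α) * ∑ t : Fin n, Real.log (ptwMarg n q t (u t)) + α * Real.log (q u)

/-- Extended-real logarithm, with `log 0 = −∞`. -/
def elog (r : ℝ) : EReal := if r = 0 then ⊥ else ((Real.log r : ℝ) : EReal)

/-- The hybrid objective with logarithms valued in the extended reals. -/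
def hybridObjE {S : Type*} [Fintype S] (n : ℕ) (q : (Fin n → S) → ℝ) (α : ℝ)
    (u : Fin n → S) : EReal :=
  ((1 - α : ℝ) : EReal) * ∑ t : Fin n, elog (ptwMarg n q t (u t)) +
    ((α : ℝ) : EReal) * elog (q u)

lemma ecoe_sum {ι : Type*} (s : Finset ι) (f : ι → ℝ) :
    ((∑ i ∈ s, f i : ℝ) : EReal) = ∑ i ∈ s, ((f i : ℝ) : EReal) :=
  map_sum (⟨⟨(fun x : ℝ => (x : EReal)), EReal.coe_zero⟩, fun a b => EReal.coe_add a b⟩ : ℝ →+ EReal) f s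

/-- **Admissibility of hybrid paths.** For any `α > 0`, every hybrid path `s`
(a maximizer of the hybrid objective, with `log 0 = −∞`) is admissible:
`P(y = s | x) > 0`. -/
theorem hybrid_path_admissible {S : Type*} [Fintype S] (n : ℕ)
    (q : (Fin n → S) → ℝ) (hq0 : ∀ u, 0 ≤ q u) (hq1 : ∑ u, q u = 1)
    (hex : ∃ u : Fin n → S, 0 < q u)
    (α : ℝ) (hα0 : 0 < α) (hα1 : α ≤ 1)
    (s : Fin n → S)
    (hs : ∀ v : Fin n → S, hybridObjE n q α v ≤ hybridObjE n q α s) :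
    0 < q s := by
  by_contra h
  have hqs : q s = 0 := le_antisymm (le_of_not_gt h) (hq0 s)
  obtain ⟨u, hu⟩ := hex
  have hmarg : ∀ t : Fin n, 0 < ptwMarg n q t (u t) := by
    intro t
    refine lt_of_lt_of_le hu ?_
    refine Finset.single_le_sum (fun v _ => hq0 v) ?_
    simp
  have hsbot : hybridObjE n q α s = ⊥ := by
    unfold hybridObjE elog
    rw [if_pos hqs, EReal.mul_bot_of_pos (by exact_mod_cast hα0), EReal.add_bot]
  have hval : hybridObjE n q α u =
      (((1 - α) * ∑ t, Real.log (ptwMarg n q t (u t)) + α * Real.log (q u) : ℝ) : EReal) := by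
    unfold hybridObjE elog
    rw [if_neg (ne_of_gt hu), Finset.sum_congr rfl (fun t _ => if_neg (ne_of_gt (hmarg t)))]
    rw [EReal.coe_add, EReal.coe_mul, EReal.coe_mul, ecoe_sum]
  have := hs u
  rw [hsbot, hval] at this
  exact EReal.coe_ne_bot _ (le_bot_iff.mp this)
end
end

section
/- For the finite Markov chain imbedding counting jumps: let (Z_t)_{t=1..n} be an inhomogeneous two-state Markov chain with transition probabilities a_t = P(Z_t = 1 | Z_{t−1} = 1) and b_t = P(Z_t = 2 | Z_{t−1} = 2) and initial law η. Define the imbedded chain W_t = (J_t, Z_t) where J_t = #{2 ≤ s ≤ t : Z_{s−1} = 1, Z_s = 2} counts 1→2 jumps up to time t, with J counts exceeding ℓ absorbed in a single state. Then (W_t) is an inhomogeneous Markov chain on the imbedded state space, and P(J_n = k) equals the sum of the appropriate entries of the row vector η Π_{t=2}^n Λ(a_t, b_t), where Λ(a, b) is the block-bidiagonal imbedding transition matrix with 2×2 diagonal blocks B(a, b) = [[b, 1−b], [0, a]] and off-diagonal entries 1−a linking state (k, 1) to state (k+1, 2). -/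
open Finset
open scoped Classical

noncomputable section

/-- Path probability of an inhomogeneous two-state Markov chain `(Z_t)_{t=0..n}` on
`Fin 2` (state `0` is "state 1", state `1` is "state 2") with initial law `η`, stay
probabilities `a t = P(Z_{t+1} = 1 | Z_t = 1)` and `b t = P(Z_{t+1} = 2 | Z_t = 2)`. -/
def twoStateMu (n : ℕ) (η : Fin 2 → ℝ) (a b : Fin n → ℝ) (z : Fin (n + 1) → Fin 2) : ℝ :=
  η (z 0) *
    ∏ t : Fin n,
      (if z t.castSucc = 0 then (if z t.succ = 0 then a t else 1 - a t)
       else (if z t.succ = 1 then b t else 1 - b t))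

/-- The FMCI transition matrix for counting jumps from state 1 to state 2: index `2k`
encodes "(k jumps, state 2)", index `2k+1` encodes "(k jumps, state 1)", and index
`2ℓ+2` is the absorbing overflow state.  The diagonal blocks are
`B(a,b) = [[b, 1−b], [0, a]]` and the off-diagonal entries `1−a` link `(k, 1)` to
`(k+1, 2)`. -/
def jumpLambda (ℓ : ℕ) (a b : ℝ) : Matrix (Fin (2 * ℓ + 3)) (Fin (2 * ℓ + 3)) ℝ :=
  fun p q =>
    if (p : ℕ) = 2 * ℓ + 2 then (if q = p then 1 else 0)
    else if q = p then (if (p : ℕ) % 2 = 0 then b else a)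
    else if (q : ℕ) = (p : ℕ) + 1 then (if (p : ℕ) % 2 = 0 then 1 - b else 1 - a)
    else 0

/-!
The pair `W_t = (J_t, Z_t)`, with all counts above `ℓ` lumped together, is itself a Markov
chain: the next value of `W` is determined by the current one and the next state of `Z`, whose
law depends on the past only through `Z_t`, which `W_t` records. Hence summing the path
probabilities over the fibres of `W_t` propagates forward by `Λ(a_t, b_t)`, and `P(J_n = k)`
for `k ≤ ℓ` is the mass of the two fibres `(k, 2)` and `(k, 1)`.
-/

theorem Fin.sum_univ_fun_snoc {α M : Type*} [Fintype α] [AddCommMonoid M] {n : ℕ}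
    (f : (Fin (n + 1) → α) → M) :
    ∑ z, f z = ∑ z : Fin n → α, ∑ s, f (Fin.snoc z s) := by
  rw [← (Fin.snocEquiv fun _ => α).sum_comp, Fintype.sum_prod_type, Finset.sum_comm]
  rfl

namespace FMCIJumps

def stayStep (α β : ℝ) (s s' : Fin 2) : ℝ :=
  if s = 0 then (if s' = 0 then α else 1 - α) else (if s' = 1 then β else 1 - β)

def jumpCount (n : ℕ) (z : Fin (n + 1) → Fin 2) : ℕ :=
  #(univ.filter fun t : Fin n => z t.castSucc = 0 ∧ z t.succ = 1)

/-- The imbedded state `(j, s)` in the encoding of `jumpLambda`. -/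
def jumpState (ℓ j : ℕ) (s : Fin 2) : Fin (2 * ℓ + 3) :=
  if h : j ≤ ℓ then ⟨2 * j + (if s = 0 then 1 else 0), by split <;> omega⟩
  else ⟨2 * ℓ + 2, by omega⟩

def jumpInit (ℓ : ℕ) (η : Fin 2 → ℝ) : Fin (2 * ℓ + 3) → ℝ :=
  fun p => if (p : ℕ) = 0 then η 1 else if (p : ℕ) = 1 then η 0 else 0

def jumpStateLaw (ℓ n : ℕ) (η : Fin 2 → ℝ) (a b : Fin n → ℝ) (p : Fin (2 * ℓ + 3)) : ℝ :=
  ∑ z ∈ univ.filter (fun z : Fin (n + 1) → Fin 2 =>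
      jumpState ℓ (jumpCount n z) (z (Fin.last n)) = p),
    twoStateMu n η a b z

lemma jumpState_val (ℓ j : ℕ) (s : Fin 2) :
    (jumpState ℓ j s : ℕ) = if j ≤ ℓ then 2 * j + (if s = 0 then 1 else 0) else 2 * ℓ + 2 := by
  unfold jumpState
  split_ifs <;> rfl

lemma twoStateMu_snoc (n : ℕ) (η : Fin 2 → ℝ) (a b : Fin (n + 1) → ℝ)
    (z : Fin (n + 1) → Fin 2) (s : Fin 2) :
    twoStateMu (n + 1) η a b (Fin.snoc z s) =
      twoStateMu n η (fun t => a t.castSucc) (fun t => b t.castSucc) z *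
        stayStep (a (Fin.last n)) (b (Fin.last n)) (z (Fin.last n)) s := by
  change _ * ∏ t, stayStep _ _ _ _ = (_ * ∏ t, stayStep _ _ _ _) * _
  rw [Fin.prod_univ_castSucc, ← mul_assoc]
  simp only [Fin.succ_last, Fin.snoc_last, ← Fin.castSucc_succ, Fin.snoc_castSucc]
  rfl

lemma jumpCount_snoc (n : ℕ) (z : Fin (n + 1) → Fin 2) (s : Fin 2) :
    jumpCount (n + 1) (Fin.snoc z s) =
      jumpCount n z + if z (Fin.last n) = 0 ∧ s = 1 then 1 else 0 := by
  simp only [jumpCount, card_filter, Fin.sum_univ_castSucc, Fin.succ_last, Fin.snoc_last,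
    ← Fin.castSucc_succ, Fin.snoc_castSucc]

/-- Row `(j, s)` of `Λ(α, β)` is the law of the next imbedded state: the chain moves to `s'`
with probability `stayStep α β s s'`, and a move `0 → 1` adds a jump. -/
lemma jumpLambda_jumpState (ℓ j : ℕ) (α β : ℝ) (s : Fin 2) (p : Fin (2 * ℓ + 3)) :
    jumpLambda ℓ α β (jumpState ℓ j s) p =
      ∑ s' : Fin 2, if jumpState ℓ (j + if s = 0 ∧ s' = 1 then 1 else 0) s' = p
        then stayStep α β s s' else 0 := by
  have hp := p.isLt
  obtain rfl | rfl : s = 0 ∨ s = 1 := by omega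
  all_goals
    simp only [Fin.sum_univ_two, stayStep, jumpLambda, Fin.ext_iff, jumpState_val]
    norm_num
    split_ifs <;> first | ring1 | (exfalso; omega)

lemma jumpStateLaw_zero (ℓ : ℕ) (η : Fin 2 → ℝ) (a b : Fin 0 → ℝ) :
    jumpStateLaw ℓ 0 η a b = jumpInit ℓ η := by
  ext ⟨p, hp⟩
  rw [jumpStateLaw, sum_filter, Fin.sum_univ_fun_snoc, Fintype.sum_unique, Fin.sum_univ_two]
  simp only [twoStateMu, jumpCount, Fin.snoc_zero, univ_eq_empty, prod_empty, mul_one,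
    filter_empty, card_empty, jumpInit, Fin.ext_iff, jumpState_val]
  norm_num
  split_ifs <;> first | ring1 | (exfalso; omega)

lemma jumpStateLaw_succ (ℓ n : ℕ) (η : Fin 2 → ℝ) (a b : Fin (n + 1) → ℝ) :
    jumpStateLaw ℓ (n + 1) η a b =
      Matrix.vecMul (jumpStateLaw ℓ n η (fun t => a t.castSucc) (fun t => b t.castSucc))
        (jumpLambda ℓ (a (Fin.last n)) (b (Fin.last n))) := by
  ext p
  set μ := twoStateMu n η (fun t => a t.castSucc) (fun t => b t.castSucc)
  set W := fun z : Fin (n + 1) → Fin 2 => jumpState ℓ (jumpCount n z) (z (Fin.last n))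
  set Λ := jumpLambda ℓ (a (Fin.last n)) (b (Fin.last n))
  calc jumpStateLaw ℓ (n + 1) η a b p
      = ∑ z, μ z * Λ (W z) p := by
        rw [jumpStateLaw, sum_filter, Fin.sum_univ_fun_snoc]
        refine sum_congr rfl fun z _ => ?_
        simp only [W, Λ, jumpLambda_jumpState, mul_sum, jumpCount_snoc, twoStateMu_snoc,
          Fin.snoc_last, mul_ite, mul_zero, μ]
    _ = ∑ q, ∑ z ∈ univ.filter (W · = q), μ z * Λ q p := by
        rw [← sum_fiberwise univ W]
        refine sum_congr rfl fun q _ => sum_congr rfl fun z hz => ?_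
        rw [(mem_filter.mp hz).2]
    _ = Matrix.vecMul (jumpStateLaw ℓ n η _ _) Λ p := by
        simp only [Matrix.vecMul, dotProduct, jumpStateLaw, sum_mul]
        rfl

lemma jumpStateLaw_eq_vecMul_prod (ℓ : ℕ) (η : Fin 2 → ℝ) :
    ∀ n (a b : Fin n → ℝ), jumpStateLaw ℓ n η a b =
      Matrix.vecMul (jumpInit ℓ η)
        ((List.finRange n).map fun t => jumpLambda ℓ (a t) (b t)).prod
  | 0, a, b => by simp [jumpStateLaw_zero]
  | n + 1, a, b => by
    rw [jumpStateLaw_succ, jumpStateLaw_eq_vecMul_prod ℓ η n, List.finRange_succ_last,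
      List.map_append, List.map_map, List.prod_append, Matrix.vecMul_vecMul]
    simp [Function.comp_def]

lemma sum_jumpCount_eq (n ℓ k : ℕ) (hk : k ≤ ℓ) (η : Fin 2 → ℝ) (a b : Fin n → ℝ) :
    ∑ z ∈ univ.filter (fun z : Fin (n + 1) → Fin 2 => jumpCount n z = k), twoStateMu n η a b z =
      ∑ s, jumpStateLaw ℓ n η a b (jumpState ℓ k s) := by
  simp only [jumpStateLaw, sum_filter, Fin.sum_univ_two, ← sum_add_distrib]
  refine sum_congr rfl fun z _ => ?_
  simp only [Fin.ext_iff, jumpState_val]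
  obtain h | h : z (Fin.last n) = 0 ∨ z (Fin.last n) = 1 := by omega
  all_goals
    simp only [h]
    norm_num
    split_ifs <;> first | ring1 | (exfalso; omega)

end FMCIJumps

/-- **FMCI for the number of jumps.** Let `(Z_t)` be an inhomogeneous two-state Markov
chain with stay probabilities `a_t`, `b_t` and initial law `η`, and let `J_n`
count the jumps `1 → 2`.  Then for every `k ≤ ℓ`, `P(J_n = k)` equals the sum of the
two entries corresponding to `(k, 2)` and `(k, 1)` of the row vector
`η̃ Π_t Λ(a_t, b_t)`, where `η̃` places `η`'s mass on `(0,2)` and `(0,1)`. -/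
theorem fmci_number_of_jumps (n ℓ : ℕ) (η : Fin 2 → ℝ)
    (a b : Fin n → ℝ)
    (k : ℕ) (hk : k ≤ ℓ) :
    ∑ z ∈ univ.filter (fun z : Fin (n + 1) → Fin 2 =>
        (univ.filter (fun t : Fin n => z t.castSucc = 0 ∧ z t.succ = 1)).card = k),
      twoStateMu n η a b z
    =
    Matrix.vecMul
        (fun p : Fin (2 * ℓ + 3) =>
          if (p : ℕ) = 0 then η 1 else if (p : ℕ) = 1 then η 0 else 0)
        (((List.finRange n).map (fun t => jumpLambda ℓ (a t) (b t))).prod)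
        ⟨2 * k, by omega⟩
    + Matrix.vecMul
        (fun p : Fin (2 * ℓ + 3) =>
          if (p : ℕ) = 0 then η 1 else if (p : ℕ) = 1 then η 0 else 0)
        (((List.finRange n).map (fun t => jumpLambda ℓ (a t) (b t))).prod)
        ⟨2 * k + 1, by omega⟩ := by
  refine (FMCIJumps.sum_jumpCount_eq n ℓ k hk η a b).trans ?_
  rw [Fin.sum_univ_two, add_comm (FMCIJumps.jumpStateLaw ℓ n η a b _),
    FMCIJumps.jumpStateLaw_eq_vecMul_prod]
  congr 2 <;> ext <;> simp [FMCIJumps.jumpState_val, hk]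
end
end

section
/- The accuracy-probability tradeoff for decoding: for any α ∈ [0, 1], let s^α be the hybrid path maximizing h_α(u) = (1−α) Σ_t log P(y_t = u_t | x) + α log P(y = u | x). Then the map α ↦ log P(y = s^α | x) is nondecreasing and the map α ↦ Σ_t log P(y_t = s^α_t | x) is nonincreasing in α. -/
open Finset
open scoped Classical

noncomputable section

/-- **Accuracy–probability tradeoff for hybrid decoding.** If `α < α'` and `s`, `s'` are
maximizers of the hybrid objectives `h_α`, `h_{α'}` respectively, then
`log P(y = s' | x) ≥ log P(y = s | x)` and
`Σ_t log P(y_t = s'_t | x) ≤ Σ_t log P(y_t = s_t | x)`: the joint-probability term is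
nondecreasing and the pointwise term is nonincreasing in `α`. -/
theorem hybrid_tradeoff_monotone {S : Type*} [Fintype S] (n : ℕ)
    (q : (Fin n → S) → ℝ) (hq : ∀ u, 0 < q u)
    (α α' : ℝ) (hα : 0 ≤ α) (hα' : α' ≤ 1) (hαα' : α < α')
    (s s' : Fin n → S)
    (hs : ∀ v : Fin n → S, hybridObj n q α v ≤ hybridObj n q α s)
    (hs' : ∀ v : Fin n → S, hybridObj n q α' v ≤ hybridObj n q α' s') :
    Real.log (q s) ≤ Real.log (q s')
    ∧ ∑ t : Fin n, Real.log (ptwMarg n q t (s' t)) ≤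
        ∑ t : Fin n, Real.log (ptwMarg n q t (s t)) := by
  have h1 := hs s'
  have h2 := hs' s
  set A := ∑ t : Fin n, Real.log (ptwMarg n q t (s t)) with hA
  set A' := ∑ t : Fin n, Real.log (ptwMarg n q t (s' t)) with hA'
  set B := Real.log (q s) with hB
  set B' := Real.log (q s') with hB'
  simp only [hybridObj] at h1 h2
  have hBB' : B ≤ B' := by nlinarith
  refine ⟨hBB', ?_⟩
  nlinarith
end
end
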